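/- arXiv:2211.04820 — 2 statements merged into one kernel-verified Lean document; each statement's English description precedes it below -/
import Mathlib

section
/- Let P be a simple thin polyomino. Then the complement graph Ḡ_P is chordal if and only if P is a short brush polyomino. -/
/-- A cell of the grid, identified with its lower-left corner. -/
abbrev Cell : Type := ℤ × ℤ

/-- Two cells are adjacent if they differ by `(±1,0)` or `(0,±1)`. -/
def Adjacent (c d : Cell) : Prop :=
  (c.1 = d.1 ∧ (c.2 = d.2 + 1 ∨ d.2 = c.2 + 1)) ∨
  (c.2 = d.2 ∧ (c.1 = d.1 + 1 ∨ d.1 = c.1 + 1))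

/-- A polyomino: a finite nonempty set of cells, any two of which are joined by a
path of adjacent cells inside the set. -/
def IsPolyomino (P : Finset Cell) : Prop :=
  P.Nonempty ∧ ∀ c ∈ P, ∀ d ∈ P,
    Relation.ReflTransGen (fun a b => Adjacent a b ∧ a ∈ P ∧ b ∈ P) c d

/-- A horizontal segment of consecutive cells in a row. -/
def IsHSeg (S : Finset Cell) : Prop :=
  ∃ y a b : ℤ, a ≤ b ∧ S = (Finset.Icc a b).image (fun x => (x, y))

/-- A vertical segment of consecutive cells in a column. -/
def IsVSeg (S : Finset Cell) : Prop :=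
  ∃ x a b : ℤ, a ≤ b ∧ S = (Finset.Icc a b).image (fun y => (x, y))

/-- A maximal horizontal cell interval of `P`. -/
def IsMaxHInterval (P I : Finset Cell) : Prop :=
  IsHSeg I ∧ I ⊆ P ∧ ∀ I', IsHSeg I' → I' ⊆ P → I ⊆ I' → I' = I

/-- A maximal vertical cell interval of `P`. -/
def IsMaxVInterval (P I : Finset Cell) : Prop :=
  IsVSeg I ∧ I ⊆ P ∧ ∀ I', IsVSeg I' → I' ⊆ P → I ⊆ I' → I' = I

/-- A maximal cell interval of `P`. -/
def IsMaxInterval (P I : Finset Cell) : Prop :=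
  IsMaxHInterval P I ∨ IsMaxVInterval P I

/-- Two distinct cells of `P` attack each other if they lie in a common maximal
cell interval of `P`. -/
def Attacks (P : Finset Cell) (c d : Cell) : Prop :=
  c ≠ d ∧ ∃ I, IsMaxInterval P I ∧ c ∈ I ∧ d ∈ I

/-- A set of pairwise non-attacking cells of `P` (a face of the rook complex). -/
def IsRookSet (P F : Finset Cell) : Prop :=
  F ⊆ P ∧ ∀ c ∈ F, ∀ d ∈ F, ¬ Attacks P c d

/-- A maximal set of pairwise non-attacking cells of `P` (a facet of the rook complex). -/
def IsMaxRookSet (P F : Finset Cell) : Prop :=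
  IsRookSet P F ∧ ∀ G, IsRookSet P G → F ⊆ G → G = F

/-- An interval `I` is embedded if some set `F` of pairwise non-attacking cells,
disjoint from `I`, attacks every cell of `I`. -/
def IsEmbedded (P I : Finset Cell) : Prop :=
  ∃ F : Finset Cell, IsRookSet P F ∧ F ∩ I = ∅ ∧ ∀ c ∈ I, ∃ f ∈ F, Attacks P f c

/-- A partition of `P`: pairwise disjoint maximal cell intervals whose union is `P`. -/
def IsPartition (P : Finset Cell) (A : Finset (Finset Cell)) : Prop :=
  (∀ I ∈ A, IsMaxInterval P I) ∧
  (∀ I ∈ A, ∀ J ∈ A, I ≠ J → Disjoint I J) ∧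
  A.biUnion id = P

/-- A super partition: a partition none of whose intervals is embedded. -/
def IsSuperPartition (P : Finset Cell) (A : Finset (Finset Cell)) : Prop :=
  IsPartition P A ∧ ∀ I ∈ A, ¬ IsEmbedded P I

/-- `P` is a square: a translate of the `n × n` block of cells for some `n ≥ 1`. -/
def IsSquareBlock (P : Finset Cell) : Prop :=
  ∃ a b n : ℤ, 1 ≤ n ∧ P = Finset.Icc a (a + n - 1) ×ˢ Finset.Icc b (b + n - 1)

/-- The graph `G_P` on the cells of `P` whose edges are the attacking pairs. -/
def GP (P : Finset Cell) : SimpleGraph {c : Cell // c ∈ P} where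
  Adj c d := Attacks P (c : Cell) (d : Cell)
  symm := by
    constructor
    rintro c d ⟨hne, I, hI, hc, hd⟩
    exact ⟨hne.symm, I, hI, hd, hc⟩
  loopless := by
    constructor
    rintro c ⟨hne, -⟩
    exact hne rfl

/-- The complement graph `Ḡ_P`. -/
def GBar (P : Finset Cell) : SimpleGraph {c : Cell // c ∈ P} := (GP P)ᶜ

/-- `G` has an induced cycle of length `n`: an injective map from `ZMod n`
whose image induces exactly the cycle adjacencies. -/
def HasInducedCycle {V : Type*} (G : SimpleGraph V) (n : ℕ) : Prop :=
  3 ≤ n ∧ ∃ f : ZMod n → V, Function.Injective f ∧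
    ∀ i j : ZMod n, G.Adj (f i) (f j) ↔ (i = j + 1 ∨ j = i + 1)

/-- A graph is chordal if it has no induced cycle of length at least 4. -/
def IsChordal {V : Type*} (G : SimpleGraph V) : Prop :=
  ∀ n, 4 ≤ n → ¬ HasInducedCycle G n

/-- `P` is simple: any two cells outside `P` are joined by a path of adjacent
cells outside `P`. -/
def IsSimple (P : Finset Cell) : Prop :=
  ∀ c d : Cell, c ∉ P → d ∉ P →
    Relation.ReflTransGen (fun a b => Adjacent a b ∧ a ∉ P ∧ b ∉ P) c d

/-- `P` is thin: it contains no four cells forming a `2 × 2` square. -/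
def IsThin (P : Finset Cell) : Prop :=
  ¬ ∃ a : Cell, ({a, (a.1 + 1, a.2), (a.1, a.2 + 1), (a.1 + 1, a.2 + 1)} : Finset Cell) ⊆ P

/-- A path of distinct cells of `P`, consecutive cells being adjacent. -/
def IsCellPath (P : Finset Cell) (l : List Cell) : Prop :=
  l.Nodup ∧ (∀ c ∈ l, c ∈ P) ∧ l.Chain' Adjacent

/-- The number of changes of direction of a path of cells: positions `k`
(with `1 ≤ k ≤ length - 2`) where the `(k-1)`-st and `(k+1)`-st cells differ
in both coordinates. -/
def dirChanges (l : List Cell) : ℕ :=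
  ((Finset.Ico 1 (l.length - 1)).filter (fun k =>
    (l.getD (k - 1) (0, 0)).1 ≠ (l.getD (k + 1) (0, 0)).1 ∧
    (l.getD (k - 1) (0, 0)).2 ≠ (l.getD (k + 1) (0, 0)).2)).card

/-- The eight rotations/reflections of the grid. -/
def dihedralMaps : List (Cell → Cell) :=
  [fun p => (p.1, p.2), fun p => (-p.2, p.1), fun p => (-p.1, -p.2), fun p => (p.2, -p.1),
   fun p => (p.2, p.1), fun p => (-p.1, p.2), fun p => (-p.2, -p.1), fun p => (p.1, -p.2)]

/-- `P` is obtained from `Q` by a translation, rotation or reflection of `ℤ²`. -/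
def CongruentTo (P Q : Finset Cell) : Prop :=
  ∃ g ∈ dihedralMaps, ∃ t : Cell, P = Q.image (fun p => g p + t)

/-- A brush polyomino with handle `J`. -/
def IsBrush (P J : Finset Cell) : Prop :=
  IsPolyomino P ∧ IsSimple P ∧ IsThin P ∧ IsMaxInterval P J ∧
  (∀ I, IsMaxInterval P I → 2 ≤ I.card → I ≠ J → (I ∩ J).Nonempty) ∧
  (∀ c ∈ P, c ∈ J ∨ ∃ I, IsMaxInterval P I ∧ 2 ≤ I.card ∧ c ∈ I)

/-- A short brush polyomino: a brush all of whose bristles have at most two cells. -/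
def IsShortBrush (P : Finset Cell) : Prop :=
  ∃ J, IsBrush P J ∧ ∀ I, IsMaxInterval P I → I ≠ J → I.card ≤ 2

/-- A pure brush polyomino: handle `J` of cardinality `d` together with `d`
pairwise disjoint bristles `I 0, …, I (d-1)` perpendicular to `J`, each meeting
`J`, whose union is `P`. -/
def IsPureBrush (P J : Finset Cell) (d : ℕ) (I : Fin d → Finset Cell) : Prop :=
  IsPolyomino P ∧ IsSimple P ∧ IsThin P ∧
  J.card = d ∧
  ((IsMaxHInterval P J ∧ ∀ k, IsMaxVInterval P (I k)) ∨
   (IsMaxVInterval P J ∧ ∀ k, IsMaxHInterval P (I k))) ∧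
  (∀ j k, j ≠ k → Disjoint (I j) (I k)) ∧
  (∀ k, ((I k) ∩ J).Nonempty) ∧
  Finset.univ.biUnion I = P

/-- The `k`-th elementary symmetric polynomial of `x 0, …, x (d-1)`. -/
def esymm {R : Type*} [CommRing R] {d : ℕ} (k : ℕ) (x : Fin d → R) : R :=
  ∑ s ∈ Finset.powersetCard k (Finset.univ : Finset (Fin d)), ∏ i ∈ s, x i

/-- `G_P` has an induced matching with `n` edges `{A i, B i}`. -/
def HasInducedMatching (P : Finset Cell) (n : ℕ) : Prop :=
  ∃ A B : Fin n → Cell,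
    (∀ i, Attacks P (A i) (B i)) ∧
    (∀ i j, i ≠ j → A i ≠ A j) ∧
    (∀ i j, i ≠ j → B i ≠ B j) ∧
    (∀ i j, A i ≠ B j) ∧
    (∀ i j, i ≠ j →
      ¬ Attacks P (A i) (A j) ∧ ¬ Attacks P (A i) (B j) ∧ ¬ Attacks P (B i) (B j))

/-- The induced matching number `ν(G_P)`. -/
noncomputable def matchNum (P : Finset Cell) : ℕ := sSup {n | HasInducedMatching P n}

/-- `c` is a single cell of the maximal interval `I`: the maximal interval of `P`
through `c` perpendicular to `I` is `{c}`. -/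
def IsSingleCell (P I : Finset Cell) (c : Cell) : Prop :=
  c ∈ I ∧
  ((IsMaxHInterval P I ∧ ∀ I', IsMaxVInterval P I' → c ∈ I' → I' = {c}) ∨
   (IsMaxVInterval P I ∧ ∀ I', IsMaxHInterval P I' → c ∈ I' → I' = {c}))

/-
The cycle `a c b d` of `Ḡ_P` is induced exactly when `{a, b}, {c, d}` is an induced matching
of `G_P`. For a short brush with handle `J`, the cells of `J` attack each other and no two cells
off `J` do (a bristle through both would have three cells), so `Ḡ_P` is a split graph and hence
chordal.

Conversely, suppose `G_P` has no induced matching with two edges. In a simple thin polyomino no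
four cells at the corners of a rectangle attack each other around it: the boundary would enclose
only cells of `P`, and then `P` contains a `2 × 2` square. Hence two perpendicular maximal
intervals with at least two cells cross and one of them has exactly two cells, two parallel ones
both have two cells and are joined by a single attacking pair, and there are never two of them
in each direction. A handle can then be read off.
-/

namespace SimpleGraph

variable {V : Type*} {G : SimpleGraph V}

theorem hasInducedCycle_four {a b c d : V} (hab : G.Adj a b) (hbc : G.Adj b c)
    (hcd : G.Adj c d) (hda : G.Adj d a) (hac : a ≠ c) (hbd : b ≠ d)
    (hac' : ¬ G.Adj a c) (hbd' : ¬ G.Adj b d) : HasInducedCycle G 4 := by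
  refine ⟨by norm_num, ![a, b, c, d], ?_, ?_⟩
  · change Function.Injective (![a, b, c, d] : Fin 4 → V)
    intro i j h
    fin_cases i <;> fin_cases j <;> simp_all [G.ne_of_adj, eq_comm]
  · change ∀ i j : Fin 4, G.Adj (![a, b, c, d] i) (![a, b, c, d] j) ↔ (i = j + 1 ∨ j = i + 1)
    intro i j
    fin_cases i <;> fin_cases j <;> simp [*, hab.symm, hbc.symm, hcd.symm, hda.symm,
      mt G.adj_symm hac', mt G.adj_symm hbd']

/-- `S` contains one of any two consecutive vertices of the cycle but no two vertices at
distance two, which is impossible along four consecutive vertices. -/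
theorem not_hasInducedCycle_of_isClique_of_isIndepSet {S : Set V} (hS : G.IsClique S)
    (hSc : G.IsIndepSet Sᶜ) {n : ℕ} (hn : 4 ≤ n) : ¬ HasInducedCycle G n := by
  rintro ⟨-, f, hf, hadj⟩
  have hne : ∀ k : ℕ, 0 < k → k < n → (k : ZMod n) ≠ 0 := fun k hk hkn h =>
    absurd (Nat.le_of_dvd hk ((ZMod.natCast_eq_zero_iff k n).1 h)) (by omega)
  have h1 : (1 : ZMod n) ≠ 0 := by exact_mod_cast hne 1 (by omega) (by omega)
  have h2 : (2 : ZMod n) ≠ 0 := by exact_mod_cast hne 2 (by omega) (by omega)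
  have h3 : (3 : ZMod n) ≠ 0 := by exact_mod_cast hne 3 (by omega) (by omega)
  have hcover : ∀ i : ZMod n, f i ∈ S ∨ f (i + 1) ∈ S := fun i => by
    by_contra! h
    exact hSc h.1 h.2 (hf.ne (by simpa using h1)) ((hadj _ _).2 (Or.inr rfl))
  have hsep : ∀ i : ZMod n, ¬ (f i ∈ S ∧ f (i + 2) ∈ S) := by
    rintro i ⟨h₀, h₂⟩
    rcases (hadj _ _).1 (hS h₀ h₂ (hf.ne (by simpa using h2))) with h | h
    · exact h3 (by linear_combination -h)
    · exact h1 (by linear_combination h)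
  have c₀ := hcover 0; have c₁ := hcover 1; have c₂ := hcover 2; have c₃ := hcover 3
  have s₀ := hsep 0; have s₁ := hsep 1; have s₂ := hsep 2
  norm_num at c₀ c₁ c₂ c₃ s₀ s₁ s₂
  tauto

end SimpleGraph

open Finset

section Segments

variable {S T : Finset Cell} {c d e : Cell}

theorem mem_image_row {a b y : ℤ} :
    c ∈ (Icc a b).image (fun x => (x, y)) ↔ a ≤ c.1 ∧ c.1 ≤ b ∧ c.2 = y := by
  simp only [mem_image, mem_Icc]
  constructor
  · rintro ⟨x, ⟨h₁, h₂⟩, rfl⟩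
    exact ⟨h₁, h₂, rfl⟩
  · exact fun h => ⟨c.1, ⟨h.1, h.2.1⟩, Prod.ext rfl h.2.2.symm⟩

theorem mem_image_col {a b x : ℤ} :
    c ∈ (Icc a b).image (fun y => (x, y)) ↔ a ≤ c.2 ∧ c.2 ≤ b ∧ c.1 = x := by
  simp only [mem_image, mem_Icc]
  constructor
  · rintro ⟨y, ⟨h₁, h₂⟩, rfl⟩
    exact ⟨h₁, h₂, rfl⟩
  · exact fun h => ⟨c.2, ⟨h.1, h.2.1⟩, Prod.ext h.2.2.symm rfl⟩

theorem IsHSeg.snd_eq (hS : IsHSeg S) (hc : c ∈ S) (hd : d ∈ S) : c.2 = d.2 := by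
  obtain ⟨y, a, b, -, rfl⟩ := hS
  rw [mem_image_row] at hc hd
  omega

theorem IsVSeg.fst_eq (hS : IsVSeg S) (hc : c ∈ S) (hd : d ∈ S) : c.1 = d.1 := by
  obtain ⟨x, a, b, -, rfl⟩ := hS
  rw [mem_image_col] at hc hd
  omega

theorem IsHSeg.mem_of_between (hS : IsHSeg S) (hc : c ∈ S) (hd : d ∈ S) (he : e.2 = c.2)
    (h₁ : min c.1 d.1 ≤ e.1) (h₂ : e.1 ≤ max c.1 d.1) : e ∈ S := by
  obtain ⟨y, a, b, -, rfl⟩ := hS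
  rw [mem_image_row] at hc hd ⊢
  omega

theorem IsVSeg.mem_of_between (hS : IsVSeg S) (hc : c ∈ S) (hd : d ∈ S) (he : e.1 = c.1)
    (h₁ : min c.2 d.2 ≤ e.2) (h₂ : e.2 ≤ max c.2 d.2) : e ∈ S := by
  obtain ⟨x, a, b, -, rfl⟩ := hS
  rw [mem_image_col] at hc hd ⊢
  omega

theorem IsHSeg.union (hS : IsHSeg S) (hT : IsHSeg T) (hST : (S ∩ T).Nonempty) :
    IsHSeg (S ∪ T) := by
  obtain ⟨y, a, b, hab, rfl⟩ := hS
  obtain ⟨y', a', b', -, rfl⟩ := hT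
  obtain ⟨c, hc⟩ := hST
  rw [mem_inter, mem_image_row, mem_image_row] at hc
  refine ⟨y, min a a', max b b', by omega, ?_⟩
  ext e
  rw [mem_union, mem_image_row, mem_image_row, mem_image_row]
  omega

theorem IsVSeg.union (hS : IsVSeg S) (hT : IsVSeg T) (hST : (S ∩ T).Nonempty) :
    IsVSeg (S ∪ T) := by
  obtain ⟨x, a, b, hab, rfl⟩ := hS
  obtain ⟨x', a', b', -, rfl⟩ := hT
  obtain ⟨c, hc⟩ := hST
  rw [mem_inter, mem_image_col, mem_image_col] at hc
  refine ⟨x, min a a', max b b', by omega, ?_⟩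
  ext e
  rw [mem_union, mem_image_col, mem_image_col, mem_image_col]
  omega

theorem IsHSeg.card_inter_le_one (hS : IsHSeg S) (hT : IsVSeg T) : (S ∩ T).card ≤ 1 :=
  card_le_one.2 fun c hc d hd => by
    rw [mem_inter] at hc hd
    exact Prod.ext (hT.fst_eq hc.2 hd.2) (hS.snd_eq hc.1 hd.1)

theorem isHSeg_singleton (c : Cell) : IsHSeg {c} :=
  ⟨c.2, c.1, c.1, le_rfl, by ext e; rw [mem_singleton, mem_image_row, Prod.ext_iff]; omega⟩

end Segments

section MaximalIntervals

variable {P I J A B : Finset Cell} {c : Cell}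

theorem exists_maximal_extend {Q : Finset Cell → Prop} {S : Finset Cell} (hS : Q S)
    (hSP : S ⊆ P) :
    ∃ I, (Q I ∧ I ⊆ P ∧ ∀ I', Q I' → I' ⊆ P → I ⊆ I' → I' = I) ∧ S ⊆ I := by
  have hfin : {I | Q I ∧ I ⊆ P}.Finite :=
    P.powerset.finite_toSet.subset fun I hI => mem_powerset.2 hI.2
  obtain ⟨I, hSI, hI⟩ := hfin.exists_le_maximal ⟨hS, hSP⟩
  exact ⟨I, ⟨hI.1.1, hI.1.2, fun I' hQ hP hII' => le_antisymm (hI.2 ⟨hQ, hP⟩ hII') hII'⟩, hSI⟩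

theorem IsMaxInterval.subset (hI : IsMaxInterval P I) : I ⊆ P :=
  hI.elim (·.2.1) (·.2.1)

theorem IsMaxHInterval.eq_of_mem (hI : IsMaxHInterval P I) (hJ : IsMaxHInterval P J)
    (hcI : c ∈ I) (hcJ : c ∈ J) : I = J := by
  have hU := hI.1.union hJ.1 ⟨c, mem_inter.2 ⟨hcI, hcJ⟩⟩
  have hUP := union_subset hI.2.1 hJ.2.1
  exact (hI.2.2 _ hU hUP subset_union_left).symm.trans (hJ.2.2 _ hU hUP subset_union_right)

theorem IsMaxVInterval.eq_of_mem (hI : IsMaxVInterval P I) (hJ : IsMaxVInterval P J)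
    (hcI : c ∈ I) (hcJ : c ∈ J) : I = J := by
  have hU := hI.1.union hJ.1 ⟨c, mem_inter.2 ⟨hcI, hcJ⟩⟩
  have hUP := union_subset hI.2.1 hJ.2.1
  exact (hI.2.2 _ hU hUP subset_union_left).symm.trans (hJ.2.2 _ hU hUP subset_union_right)

theorem IsMaxHInterval.disjoint_of_ne (hA : IsMaxHInterval P A) (hB : IsMaxHInterval P B)
    (hAB : A ≠ B) : Disjoint A B :=
  disjoint_left.2 fun _ hcA hcB => hAB (hA.eq_of_mem hB hcA hcB)

theorem IsMaxVInterval.disjoint_of_ne (hA : IsMaxVInterval P A) (hB : IsMaxVInterval P B)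
    (hAB : A ≠ B) : Disjoint A B :=
  disjoint_left.2 fun _ hcA hcB => hAB (hA.eq_of_mem hB hcA hcB)

theorem exists_isMaxInterval (hP : P.Nonempty) : ∃ I, IsMaxInterval P I := by
  obtain ⟨c, hc⟩ := hP
  obtain ⟨I, hI, -⟩ := exists_maximal_extend (isHSeg_singleton c) (singleton_subset_iff.2 hc)
  exact ⟨I, Or.inl hI⟩

end MaximalIntervals

section Attacks

variable {P A : Finset Cell} {c d e : Cell}

theorem Attacks.symm (h : Attacks P c d) : Attacks P d c :=
  ⟨h.1.symm, h.2.imp fun _ hI => ⟨hI.1, hI.2.2, hI.2.1⟩⟩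

theorem Attacks.mem_of_row (h : Attacks P c d) (hcd : c.2 = d.2) (he : e.2 = c.2)
    (h₁ : min c.1 d.1 ≤ e.1) (h₂ : e.1 ≤ max c.1 d.1) : e ∈ P := by
  obtain ⟨hne, I, hI | hI, hc, hd⟩ := h
  · exact hI.2.1 (hI.1.mem_of_between hc hd he h₁ h₂)
  · exact absurd (Prod.ext (hI.1.fst_eq hc hd) hcd) hne

theorem Attacks.mem_of_col (h : Attacks P c d) (hcd : c.1 = d.1) (he : e.1 = c.1)
    (h₁ : min c.2 d.2 ≤ e.2) (h₂ : e.2 ≤ max c.2 d.2) : e ∈ P := by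
  obtain ⟨hne, I, hI | hI, hc, hd⟩ := h
  · exact absurd (Prod.ext hcd (hI.1.snd_eq hc hd)) hne
  · exact hI.2.1 (hI.1.mem_of_between hc hd he h₁ h₂)

theorem attacks_of_adjacent (hc : c ∈ P) (hd : d ∈ P) (hcd : Adjacent c d) : Attacks P c d := by
  have hne : c ≠ d := by rintro rfl; unfold Adjacent at hcd; omega
  have hmem : ∀ e : Cell, e = c ∨ e = d → e ∈ P := by rintro e (rfl | rfl) <;> assumption
  rcases hcd with ⟨hx, hy⟩ | ⟨hy, hx⟩
  · obtain ⟨I, hI, hsub⟩ := exists_maximal_extend (P := P) (Q := IsVSeg)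
      ⟨c.1, min c.2 d.2, max c.2 d.2, min_le_max, rfl⟩ fun e he => by
        rw [mem_image_col] at he; exact hmem e (by rw [Prod.ext_iff, Prod.ext_iff]; omega)
    exact ⟨hne, I, Or.inr hI, hsub (by rw [mem_image_col]; omega),
      hsub (by rw [mem_image_col]; omega)⟩
  · obtain ⟨I, hI, hsub⟩ := exists_maximal_extend (P := P) (Q := IsHSeg)
      ⟨c.2, min c.1 d.1, max c.1 d.1, min_le_max, rfl⟩ fun e he => by
        rw [mem_image_row] at he; exact hmem e (by rw [Prod.ext_iff, Prod.ext_iff]; omega)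
    exact ⟨hne, I, Or.inl hI, hsub (by rw [mem_image_row]; omega),
      hsub (by rw [mem_image_row]; omega)⟩

theorem IsMaxHInterval.exists_maxV_of_attacks (hA : IsMaxHInterval P A) (hc : c ∈ A)
    (hd : d ∉ A) (h : Attacks P c d) : ∃ I, IsMaxVInterval P I ∧ c ∈ I ∧ d ∈ I := by
  obtain ⟨-, I, hI | hI, hcI, hdI⟩ := h
  · exact absurd (hI.eq_of_mem hA hcI hc ▸ hdI) hd
  · exact ⟨I, hI, hcI, hdI⟩

theorem IsMaxVInterval.exists_maxH_of_attacks (hA : IsMaxVInterval P A) (hc : c ∈ A)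
    (hd : d ∉ A) (h : Attacks P c d) : ∃ I, IsMaxHInterval P I ∧ c ∈ I ∧ d ∈ I := by
  obtain ⟨-, I, hI | hI, hcI, hdI⟩ := h
  · exact ⟨I, hI, hcI, hdI⟩
  · exact absurd (hI.eq_of_mem hA hcI hc ▸ hdI) hd

end Attacks

section Rectangles

variable {P : Finset Cell}

theorem IsThin.false_of_square (ht : IsThin P) (x y : ℤ)
    (h : ∀ c : Cell, x ≤ c.1 → c.1 ≤ x + 1 → y ≤ c.2 → c.2 ≤ y + 1 → c ∈ P) : False :=
  ht ⟨(x, y), fun c hc => by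
    simp only [mem_insert, mem_singleton] at hc
    rcases hc with rfl | rfl | rfl | rfl <;> exact h _ (by simp) (by simp) (by simp) (by simp)⟩

/-- A path outside `P` from an enclosed cell to a cell far away would cross the boundary. -/
theorem IsSimple.mem_of_boundary_subset (hs : IsSimple P) {x₁ x₂ y₁ y₂ : ℤ}
    (hbd : ∀ c : Cell, x₁ ≤ c.1 → c.1 ≤ x₂ → y₁ ≤ c.2 → c.2 ≤ y₂ →
      (c.1 = x₁ ∨ c.1 = x₂ ∨ c.2 = y₁ ∨ c.2 = y₂) → c ∈ P)
    {q : Cell} (h₁ : x₁ < q.1) (h₂ : q.1 < x₂) (h₃ : y₁ < q.2) (h₄ : q.2 < y₂) : q ∈ P := by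
  by_contra hq
  obtain ⟨d, hd⟩ := Infinite.exists_notMem_finset (P ∪ Icc x₁ x₂ ×ˢ Icc y₁ y₂)
  simp only [mem_union, mem_product, mem_Icc, not_or] at hd
  have hinside : ∀ e, Relation.ReflTransGen (fun a b => Adjacent a b ∧ a ∉ P ∧ b ∉ P) q e →
      x₁ < e.1 ∧ e.1 < x₂ ∧ y₁ < e.2 ∧ e.2 < y₂ := by
    intro e he
    induction he with
    | refl => exact ⟨h₁, h₂, h₃, h₄⟩
    | tail _ hstep ih =>
      obtain ⟨hadj, -, he⟩ := hstep
      unfold Adjacent at hadj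
      by_contra hout
      exact he (hbd _ (by omega) (by omega) (by omega) (by omega) (by omega))
  have := hinside d (hs q d hq hd.1)
  exact hd.2 ⟨⟨by omega, by omega⟩, by omega, by omega⟩

theorem false_of_rectangle_boundary_subset (hs : IsSimple P) (ht : IsThin P) {x₁ x₂ y₁ y₂ : ℤ}
    (hx : x₁ < x₂) (hy : y₁ < y₂)
    (hbd : ∀ c : Cell, x₁ ≤ c.1 → c.1 ≤ x₂ → y₁ ≤ c.2 → c.2 ≤ y₂ →
      (c.1 = x₁ ∨ c.1 = x₂ ∨ c.2 = y₁ ∨ c.2 = y₂) → c ∈ P) : False :=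
  ht.false_of_square x₁ y₁ fun c h₁ h₂ h₃ h₄ =>
    if hin : x₁ < c.1 ∧ c.1 < x₂ ∧ y₁ < c.2 ∧ c.2 < y₂ then
      hs.mem_of_boundary_subset hbd hin.1 hin.2.1 hin.2.2.1 hin.2.2.2
    else hbd c h₁ (by omega) h₃ (by omega) (by omega)

theorem false_of_attacks_rectangle (hs : IsSimple P) (ht : IsThin P) {p q r s : Cell}
    (hpq : p.2 = q.2) (hqr : q.1 = r.1) (hrs : r.2 = s.2) (hsp : s.1 = p.1)
    (h₁ : Attacks P p q) (h₂ : Attacks P q r) (h₃ : Attacks P r s) (h₄ : Attacks P s p) :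
    False := by
  have hx : p.1 ≠ q.1 := fun h => h₁.1 (Prod.ext h hpq)
  have hy : q.2 ≠ r.2 := fun h => h₂.1 (Prod.ext hqr h)
  refine false_of_rectangle_boundary_subset hs ht (x₁ := min p.1 q.1) (x₂ := max p.1 q.1)
    (y₁ := min q.2 r.2) (y₂ := max q.2 r.2) (by omega) (by omega) fun c _ _ _ _ hc => ?_
  rcases (by omega : c.1 = p.1 ∨ c.1 = q.1 ∨ c.2 = p.2 ∨ c.2 = r.2) with h | h | h | h
  · exact h₄.mem_of_col hsp (by omega) (by omega) (by omega)
  · exact h₂.mem_of_col hqr (by omega) (by omega) (by omega)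
  · exact h₁.mem_of_row hpq (by omega) (by omega) (by omega)
  · exact h₃.mem_of_row hrs (by omega) (by omega) (by omega)

end Rectangles

section InducedMatching

variable {P A B X Y : Finset Cell} {a b c d : Cell}

theorem Attacks.left_mem (h : Attacks P c d) : c ∈ P :=
  let ⟨_, _, hI, hc, _⟩ := h; hI.subset hc

theorem Attacks.right_mem (h : Attacks P c d) : d ∈ P :=
  h.symm.left_mem

theorem gBar_adj {u v : {c : Cell // c ∈ P}} :
    (GBar P).Adj u v ↔ (u : Cell) ≠ v ∧ ¬ Attacks P u v :=
  (SimpleGraph.compl_adj _ u v).trans (and_congr_left' Subtype.coe_ne_coe.symm)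

theorem hasInducedMatching_two_of_attacks (hab : Attacks P a b) (hcd : Attacks P c d)
    (hac : ¬ Attacks P a c) (had : ¬ Attacks P a d) (hbc : ¬ Attacks P b c)
    (hbd : ¬ Attacks P b d) : HasInducedMatching P 2 := by
  have hac' : a ≠ c := by rintro rfl; exact had hcd
  have had' : a ≠ d := by rintro rfl; exact hac hcd.symm
  have hbc' : b ≠ c := by rintro rfl; exact hbd hcd
  have hbd' : b ≠ d := by rintro rfl; exact hbc hcd.symm
  refine ⟨![a, c], ![b, d], Fin.forall_fin_two.2 ⟨hab, hcd⟩, ?_, ?_, ?_, ?_⟩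
  · simp [Fin.forall_fin_two, hac', hac'.symm]
  · simp [Fin.forall_fin_two, hbd', hbd'.symm]
  · simp [Fin.forall_fin_two, hab.1, hcd.1, had', hbc'.symm]
  · simp [Fin.forall_fin_two, hac, had, hbd, mt Attacks.symm hac, mt Attacks.symm hbc,
      mt Attacks.symm hbd]

theorem not_isChordal_gBar (h : HasInducedMatching P 2) : ¬ IsChordal (GBar P) := by
  obtain ⟨A, B, hAB, hA, hB, hAB', hcross⟩ := h
  obtain ⟨h₁, h₂, h₃⟩ := hcross 0 1 (by decide)
  have h₄ := (hcross 1 0 (by decide)).2.1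
  have hmem := fun i => (hAB i).left_mem
  have hmem' := fun i => (hAB i).right_mem
  intro hch
  refine hch 4 le_rfl (SimpleGraph.hasInducedCycle_four (a := ⟨A 0, hmem 0⟩)
    (b := ⟨A 1, hmem 1⟩) (c := ⟨B 0, hmem' 0⟩) (d := ⟨B 1, hmem' 1⟩) ?_ ?_ ?_ ?_ ?_ ?_ ?_ ?_)
  all_goals simp only [gBar_adj, ne_eq, Subtype.mk.injEq, not_and, not_not]
  · exact ⟨hA 0 1 (by decide), h₁⟩
  · exact ⟨hAB' 1 0, h₄⟩
  · exact ⟨hB 0 1 (by decide), h₃⟩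
  · exact ⟨(hAB' 0 1).symm, mt Attacks.symm h₂⟩
  · exact (hAB 0).1
  · exact (hAB 1).1
  · exact fun _ => hAB 0
  · exact fun _ => hAB 1

theorem card_le_one_or_card_le_one_of_forall_not_attacks (hP2 : ¬ HasInducedMatching P 2)
    (hA : IsMaxInterval P A) (hB : IsMaxInterval P B) (hX : X ⊆ A) (hY : Y ⊆ B)
    (hXY : ∀ x ∈ X, ∀ y ∈ Y, ¬ Attacks P x y) : X.card ≤ 1 ∨ Y.card ≤ 1 := by
  by_contra! h
  obtain ⟨a, ha, b, hb, hab⟩ := one_lt_card.1 h.1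
  obtain ⟨c, hc, d, hd, hcd⟩ := one_lt_card.1 h.2
  exact hP2 (hasInducedMatching_two_of_attacks ⟨hab, A, hA, hX ha, hX hb⟩ ⟨hcd, B, hB, hY hc, hY hd⟩
    (hXY a ha c hc) (hXY a ha d hd) (hXY b hb c hc) (hXY b hb d hd))

theorem card_eq_two_of_unique_attacks (hP2 : ¬ HasInducedMatching P 2)
    (hA : IsMaxInterval P A) (hB : IsMaxInterval P B) (hA2 : 2 ≤ A.card) (hB2 : 2 ≤ B.card)
    (huniq : ∀ u ∈ A, ∀ v ∈ B, ∀ u' ∈ A, ∀ v' ∈ B, Attacks P u v → Attacks P u' v' →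
      u = u' ∧ v = v') :
    A.card = 2 ∧ B.card = 2 ∧ ∃ u ∈ A, ∃ v ∈ B, Attacks P u v := by
  obtain ⟨u, hu, v, hv, huv⟩ : ∃ u ∈ A, ∃ v ∈ B, Attacks P u v := by
    by_contra! h
    have := card_le_one_or_card_le_one_of_forall_not_attacks hP2 hA hB subset_rfl subset_rfl h
    omega
  have hA' := card_le_one_or_card_le_one_of_forall_not_attacks hP2 hA hB (erase_subset u A)
    subset_rfl fun x hx y hy hxy =>
      (mem_erase.1 hx).1 (huniq x (mem_of_mem_erase hx) y hy u hu v hv hxy huv).1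
  have hB' := card_le_one_or_card_le_one_of_forall_not_attacks hP2 hA hB subset_rfl
    (erase_subset v B) fun x hx y hy hxy =>
      (mem_erase.1 hy).1 (huniq x hx y (mem_of_mem_erase hy) u hu v hv hxy huv).2
  have := card_erase_of_mem hu
  have := card_erase_of_mem hv
  exact ⟨by omega, by omega, u, hu, v, hv, huv⟩

end InducedMatching

section NoInducedMatching

variable {P A B I K : Finset Cell} (hs : IsSimple P) (ht : IsThin P)
  (hP2 : ¬ HasInducedMatching P 2)
include hs ht

theorem IsMaxHInterval.eq_of_attacks (hA : IsMaxHInterval P A) (hB : IsMaxHInterval P B)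
    (hAB : Disjoint A B) {u u' v v' : Cell} (hu : u ∈ A) (hv : v ∈ B) (hu' : u' ∈ A)
    (hv' : v' ∈ B) (h : Attacks P u v) (h' : Attacks P u' v') : u = u' := by
  by_contra hne
  obtain ⟨I, hI, huI, hvI⟩ := hA.exists_maxV_of_attacks hu (disjoint_right.1 hAB hv) h
  obtain ⟨I', hI', huI', hvI'⟩ := hA.exists_maxV_of_attacks hu' (disjoint_right.1 hAB hv') h'
  have hcol := hI.1.fst_eq huI hvI
  have hcol' := hI'.1.fst_eq huI' hvI'
  have hrow := hA.1.snd_eq hu hu'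
  have hvv' : v ≠ v' := by rintro rfl; exact hne (Prod.ext (by omega) hrow)
  exact false_of_attacks_rectangle hs ht hrow hcol' (hB.1.snd_eq hv' hv) hcol.symm
    ⟨hne, A, Or.inl hA, hu, hu'⟩ h' ⟨hvv'.symm, B, Or.inl hB, hv', hv⟩ h.symm

theorem IsMaxVInterval.eq_of_attacks (hA : IsMaxVInterval P A) (hB : IsMaxVInterval P B)
    (hAB : Disjoint A B) {u u' v v' : Cell} (hu : u ∈ A) (hv : v ∈ B) (hu' : u' ∈ A)
    (hv' : v' ∈ B) (h : Attacks P u v) (h' : Attacks P u' v') : u = u' := by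
  by_contra hne
  obtain ⟨I, hI, huI, hvI⟩ := hA.exists_maxH_of_attacks hu (disjoint_right.1 hAB hv) h
  obtain ⟨I', hI', huI', hvI'⟩ := hA.exists_maxH_of_attacks hu' (disjoint_right.1 hAB hv') h'
  have hrow := hI.1.snd_eq huI hvI
  have hrow' := hI'.1.snd_eq huI' hvI'
  have hcol := hA.1.fst_eq hu hu'
  have hvv' : v ≠ v' := by rintro rfl; exact hne (Prod.ext hcol (by omega))
  exact false_of_attacks_rectangle hs ht hrow (hB.1.fst_eq hv hv') hrow'.symm hcol.symm
    h ⟨hvv', B, Or.inr hB, hv, hv'⟩ h'.symm ⟨Ne.symm hne, A, Or.inr hA, hu', hu⟩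

include hP2

theorem IsMaxHInterval.card_eq_two_of_ne (hA : IsMaxHInterval P A) (hB : IsMaxHInterval P B)
    (hAB : A ≠ B) (hA2 : 2 ≤ A.card) (hB2 : 2 ≤ B.card) :
    A.card = 2 ∧ B.card = 2 ∧ ∃ u ∈ A, ∃ v ∈ B, Attacks P u v :=
  have hd := hA.disjoint_of_ne hB hAB
  card_eq_two_of_unique_attacks hP2 (Or.inl hA) (Or.inl hB) hA2 hB2
    fun _ hu _ hv _ hu' _ hv' h h' => ⟨hA.eq_of_attacks hs ht hB hd hu hv hu' hv' h h',
      hB.eq_of_attacks hs ht hA hd.symm hv hu hv' hu' h.symm h'.symm⟩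

theorem IsMaxVInterval.card_eq_two_of_ne (hA : IsMaxVInterval P A) (hB : IsMaxVInterval P B)
    (hAB : A ≠ B) (hA2 : 2 ≤ A.card) (hB2 : 2 ≤ B.card) :
    A.card = 2 ∧ B.card = 2 ∧ ∃ u ∈ A, ∃ v ∈ B, Attacks P u v :=
  have hd := hA.disjoint_of_ne hB hAB
  card_eq_two_of_unique_attacks hP2 (Or.inr hA) (Or.inr hB) hA2 hB2
    fun _ hu _ hv _ hu' _ hv' h h' => ⟨hA.eq_of_attacks hs ht hB hd hu hv hu' hv' h h',
      hB.eq_of_attacks hs ht hA hd.symm hv hu hv' hu' h.symm h'.symm⟩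

omit hs ht in
theorem IsMaxHInterval.inter_nonempty_and_card_eq_two (hA : IsMaxHInterval P A)
    (hB : IsMaxVInterval P B) (hA2 : 2 ≤ A.card) (hB2 : 2 ≤ B.card) :
    (A ∩ B).Nonempty ∧ (A.card = 2 ∨ B.card = 2) := by
  have hno : ∀ a ∈ A \ B, ∀ b ∈ B \ A, ¬ Attacks P a b := fun a ha b hb h => by
    rw [mem_sdiff] at ha hb
    obtain ⟨I, hI, haI, hbI⟩ := hA.exists_maxV_of_attacks ha.1 hb.2 h
    exact ha.2 (hI.eq_of_mem hB hbI hb.1 ▸ haI)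
  have := card_le_one_or_card_le_one_of_forall_not_attacks hP2 (Or.inl hA) (Or.inr hB)
    sdiff_subset sdiff_subset hno
  have := hA.1.card_inter_le_one hB.1
  have := card_sdiff_add_card_inter A B
  have := card_sdiff_add_card_inter B A
  rw [inter_comm B A] at this
  exact ⟨card_pos.1 (by omega), by omega⟩

theorem false_of_two_maxH_two_maxV (hA : IsMaxHInterval P A) (hB : IsMaxHInterval P B)
    (hAB : A ≠ B) (hI : IsMaxVInterval P I) (hK : IsMaxVInterval P K) (hIK : I ≠ K)
    (hA2 : 2 ≤ A.card) (hB2 : 2 ≤ B.card) (hI2 : 2 ≤ I.card) (hK2 : 2 ≤ K.card) : False := by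
  obtain ⟨p, hp⟩ := (hA.inter_nonempty_and_card_eq_two hP2 hI hA2 hI2).1
  obtain ⟨q, hq⟩ := (hA.inter_nonempty_and_card_eq_two hP2 hK hA2 hK2).1
  obtain ⟨q', hq'⟩ := (hB.inter_nonempty_and_card_eq_two hP2 hK hB2 hK2).1
  obtain ⟨p', hp'⟩ := (hB.inter_nonempty_and_card_eq_two hP2 hI hB2 hI2).1
  rw [mem_inter] at hp hq hq' hp'
  exact false_of_attacks_rectangle hs ht (hA.1.snd_eq hp.1 hq.1) (hK.1.fst_eq hq.2 hq'.2)
    (hB.1.snd_eq hq'.1 hp'.1) (hI.1.fst_eq hp'.2 hp.2)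
    ⟨fun h => hIK (hI.eq_of_mem hK hp.2 (h ▸ hq.2)), A, Or.inl hA, hp.1, hq.1⟩
    ⟨fun h => hAB (hA.eq_of_mem hB hq.1 (h ▸ hq'.1)), K, Or.inr hK, hq.2, hq'.2⟩
    ⟨fun h => hIK (hI.eq_of_mem hK hp'.2 (h ▸ hq'.2)), B, Or.inl hB, hq'.1, hp'.1⟩
    ⟨fun h => hAB (hA.eq_of_mem hB hp.1 (h ▸ hp'.1)), I, Or.inr hI, hp'.2, hp.2⟩

end NoInducedMatching

def IsShortBrushHandle (P J : Finset Cell) : Prop :=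
  IsMaxInterval P J ∧
    ∀ I, IsMaxInterval P I → 2 ≤ I.card → I ≠ J → (I ∩ J).Nonempty ∧ I.card ≤ 2

section Handle

variable {P A B : Finset Cell} (hs : IsSimple P) (ht : IsThin P)
  (hP2 : ¬ HasInducedMatching P 2)
include hs ht hP2

theorem IsMaxHInterval.exists_isShortBrushHandle (hA : IsMaxHInterval P A)
    (hB : IsMaxHInterval P B) (hAB : A ≠ B) (hA2 : 2 ≤ A.card) (hB2 : 2 ≤ B.card) :
    ∃ J, IsShortBrushHandle P J := by
  obtain ⟨-, -, u, hu, v, hv, huv⟩ := hA.card_eq_two_of_ne hs ht hP2 hB hAB hA2 hB2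
  obtain ⟨J, hJ, huJ, hvJ⟩ :=
    hA.exists_maxV_of_attacks hu (disjoint_right.1 (hA.disjoint_of_ne hB hAB) hv) huv
  have hJ2 : 2 ≤ J.card := one_lt_card.2 ⟨u, huJ, v, hvJ, huv.1⟩
  refine ⟨J, Or.inr hJ, fun I hI hI2 hIJ => ?_⟩
  rcases hI with hI | hI
  · refine ⟨(hI.inter_nonempty_and_card_eq_two hP2 hJ hI2 hJ2).1, ?_⟩
    by_cases hIA : I = A
    · subst hIA
      exact (hI.card_eq_two_of_ne hs ht hP2 hB hAB hI2 hB2).1.le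
    · exact (hI.card_eq_two_of_ne hs ht hP2 hA hIA hI2 hA2).1.le
  · exact (false_of_two_maxH_two_maxV hs ht hP2 hA hB hAB hJ hI (Ne.symm hIJ) hA2 hB2 hJ2
      hI2).elim

theorem IsMaxVInterval.exists_isShortBrushHandle (hA : IsMaxVInterval P A)
    (hB : IsMaxVInterval P B) (hAB : A ≠ B) (hA2 : 2 ≤ A.card) (hB2 : 2 ≤ B.card) :
    ∃ J, IsShortBrushHandle P J := by
  obtain ⟨-, -, u, hu, v, hv, huv⟩ := hA.card_eq_two_of_ne hs ht hP2 hB hAB hA2 hB2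
  obtain ⟨J, hJ, huJ, hvJ⟩ :=
    hA.exists_maxH_of_attacks hu (disjoint_right.1 (hA.disjoint_of_ne hB hAB) hv) huv
  have hJ2 : 2 ≤ J.card := one_lt_card.2 ⟨u, huJ, v, hvJ, huv.1⟩
  refine ⟨J, Or.inl hJ, fun I hI hI2 hIJ => ?_⟩
  rcases hI with hI | hI
  · exact (false_of_two_maxH_two_maxV hs ht hP2 hJ hI (Ne.symm hIJ) hA hB hAB hJ2 hI2 hA2
      hB2).elim
  · refine ⟨inter_comm J I ▸ (hJ.inter_nonempty_and_card_eq_two hP2 hI hJ2 hI2).1, ?_⟩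
    by_cases hIA : I = A
    · subst hIA
      exact (hI.card_eq_two_of_ne hs ht hP2 hB hAB hI2 hB2).1.le
    · exact (hI.card_eq_two_of_ne hs ht hP2 hA hIA hI2 hA2).1.le

omit hs ht in
/-- A maximal interval of largest cardinality is a handle. -/
theorem exists_isShortBrushHandle_of_subsingleton (hP : P.Nonempty)
    (hH : ∀ A B, IsMaxHInterval P A → 2 ≤ A.card → IsMaxHInterval P B → 2 ≤ B.card → A = B)
    (hV : ∀ A B, IsMaxVInterval P A → 2 ≤ A.card → IsMaxVInterval P B → 2 ≤ B.card → A = B) :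
    ∃ J, IsShortBrushHandle P J := by
  classical
  have hmem : ∀ {I}, IsMaxInterval P I → I ∈ P.powerset.filter (IsMaxInterval P) :=
    fun hI => mem_filter.2 ⟨mem_powerset.2 hI.subset, hI⟩
  obtain ⟨J, hJ, hmax⟩ := (P.powerset.filter (IsMaxInterval P)).exists_max_image card
    ((exists_isMaxInterval hP).imp fun _ => hmem)
  have hJ := (mem_filter.1 hJ).2
  refine ⟨J, hJ, fun I hI hI2 hIJ => ?_⟩
  have hIJc := hmax I (hmem hI)
  rcases hI with hI | hI <;> rcases hJ with hJ | hJ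
  · exact absurd (hH I J hI hI2 hJ (by omega)) hIJ
  · have := hI.inter_nonempty_and_card_eq_two hP2 hJ hI2 (by omega)
    exact ⟨this.1, by omega⟩
  · have := hJ.inter_nonempty_and_card_eq_two hP2 hI (by omega) hI2
    exact ⟨inter_comm J I ▸ this.1, by omega⟩
  · exact absurd (hV I J hI hI2 hJ (by omega)) hIJ

theorem exists_isShortBrushHandle (hP : P.Nonempty) : ∃ J, IsShortBrushHandle P J := by
  by_cases hH : ∃ A B, IsMaxHInterval P A ∧ 2 ≤ A.card ∧ IsMaxHInterval P B ∧ 2 ≤ B.card ∧ A ≠ B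
  · obtain ⟨A, B, hA, hA2, hB, hB2, hAB⟩ := hH
    exact hA.exists_isShortBrushHandle hs ht hP2 hB hAB hA2 hB2
  by_cases hV : ∃ A B, IsMaxVInterval P A ∧ 2 ≤ A.card ∧ IsMaxVInterval P B ∧ 2 ≤ B.card ∧ A ≠ B
  · obtain ⟨A, B, hA, hA2, hB, hB2, hAB⟩ := hV
    exact hA.exists_isShortBrushHandle hs ht hP2 hB hAB hA2 hB2
  push Not at hH hV
  exact exists_isShortBrushHandle_of_subsingleton hP2 hP hH hV

end Handle

theorem IsPolyomino.exists_adjacent {P : Finset Cell} (hP : IsPolyomino P) {c d : Cell}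
    (hc : c ∈ P) (hd : d ∈ P) (hcd : c ≠ d) : ∃ e ∈ P, Adjacent c e := by
  rcases (hP.2 c hc d hd).cases_head with rfl | ⟨e, ⟨hce, -, he⟩, -⟩
  · exact absurd rfl hcd
  · exact ⟨e, he, hce⟩

theorem IsMaxInterval.nonempty {P I : Finset Cell} (hI : IsMaxInterval P I) : I.Nonempty := by
  rcases hI with ⟨⟨y, a, b, hab, rfl⟩, -⟩ | ⟨⟨x, a, b, hab, rfl⟩, -⟩
  · exact ⟨(a, y), mem_image_row.2 ⟨le_rfl, hab, rfl⟩⟩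
  · exact ⟨(x, a), mem_image_col.2 ⟨le_rfl, hab, rfl⟩⟩

theorem IsShortBrushHandle.isShortBrush {P J : Finset Cell} (hJ : IsShortBrushHandle P J)
    (hP : IsPolyomino P) (hs : IsSimple P) (ht : IsThin P) : IsShortBrush P := by
  refine ⟨J, ⟨hP, hs, ht, hJ.1, fun I hI hI2 hIJ => (hJ.2 I hI hI2 hIJ).1, fun c hc => ?_⟩,
    fun I hI hIJ => ?_⟩
  · by_cases hd : ∃ d ∈ P, c ≠ d
    · obtain ⟨d, hd, hcd⟩ := hd
      obtain ⟨e, he, hce⟩ := hP.exists_adjacent hc hd hcd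
      obtain ⟨hne, I, hI, hcI, heI⟩ := attacks_of_adjacent hc he hce
      exact Or.inr ⟨I, hI, one_lt_card.2 ⟨c, hcI, e, heI, hne⟩, hcI⟩
    · push Not at hd
      obtain ⟨j, hj⟩ := hJ.1.nonempty
      exact Or.inl (hd j (hJ.1.subset hj) ▸ hj)
  · by_contra! h
    exact absurd (hJ.2 I hI (by omega) hIJ).2 (by omega)

theorem IsShortBrush.isChordal_gBar {P : Finset Cell} (h : IsShortBrush P) :
    IsChordal (GBar P) := by
  obtain ⟨J, ⟨-, -, -, hJ, hmeet, -⟩, hshort⟩ := h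
  have hoff : ∀ {c d}, c ∉ J → d ∉ J → ¬ Attacks P c d := by
    rintro c d hc hd ⟨hcd, I, hI, hcI, hdI⟩
    have hIJ : I ≠ J := by rintro rfl; exact hc hcI
    obtain ⟨j, hj⟩ := hmeet I hI (one_lt_card.2 ⟨c, hcI, d, hdI, hcd⟩) hIJ
    rw [mem_inter] at hj
    have : 2 < I.card := two_lt_card.2 ⟨j, hj.1, c, hcI, d, hdI,
      by rintro rfl; exact hc hj.2, by rintro rfl; exact hd hj.2, hcd⟩
    exact absurd (hshort I hI hIJ) (by omega)
  refine fun n hn => SimpleGraph.not_hasInducedCycle_of_isClique_of_isIndepSet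
    (S := {c | c.1 ∉ J}) (fun c hc d hd hcd => ?_) (fun c hc d hd hcd => ?_) hn
  · exact gBar_adj.2 ⟨Subtype.coe_ne_coe.2 hcd, hoff hc hd⟩
  · exact fun hadj => (gBar_adj.1 hadj).2
      ⟨Subtype.coe_ne_coe.2 hcd, J, hJ, not_not.1 hc, not_not.1 hd⟩

/-- For a simple thin polyomino `P`, the graph `Ḡ_P` is chordal iff `P` is a
short brush polyomino. -/
theorem statement11 (P : Finset Cell) (hP : IsPolyomino P) (hs : IsSimple P)
    (ht : IsThin P) :
    IsChordal (GBar P) ↔ IsShortBrush P := by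
  refine ⟨fun hch => ?_, IsShortBrush.isChordal_gBar⟩
  obtain ⟨J, hJ⟩ := exists_isShortBrushHandle hs ht (fun h => not_isChordal_gBar h hch) hP.1
  exact hJ.isShortBrush hP hs ht
end

section
/- Let P be a pure brush polyomino with handle J, |J| = d, and bristles I_1,…,I_d with ℓ_k = |I_k|. Then for every 1 ≤ k ≤ d, the number of k-element sets of pairwise non-attacking cells of P equals e_k(ℓ_1−1,…,ℓ_d−1) + (d−k+1) · e_{k−1}(ℓ_1−1,…,ℓ_d−1). -/
/-!
In a pure brush the only maximal cell intervals with at least two cells are the handle and the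
bristles: a vertical one lies in a single column, hence in a single bristle, and a horizontal one
contains two side-by-side cells, which by thinness can only sit on the handle row. So a set of cells
is non-attacking iff it meets every bristle and the handle at most once. Writing `w j` for the
cell where bristle `j` crosses the handle, a non-attacking `k`-set either avoids the handle, which
leaves `e_k(ℓ - 1)` choices of one non-handle cell in each of `k` bristles, or consists of one
`w j₀` and `k - 1` non-handle cells in distinct bristles other than `j₀`; summing over `j₀` counts
each `(k - 1)`-set of bristles `d - (k - 1)` times. A brush with vertical handle is the transpose
of one with horizontal handle.
-/

open Finset Function

section PartialTransversals

variable {α ι : Type*} [DecidableEq α]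

def partialTransversals (C : ι → Finset α) (s : Finset ι) (k : ℕ) : Finset (Finset α) :=
  {F ∈ (s.biUnion C).powerset | #F = k ∧ ∀ j ∈ s, #(F ∩ C j) ≤ 1}

variable {C : ι → Finset α} {s : Finset ι} {k : ℕ} {F : Finset α}

lemma mem_partialTransversals :
    F ∈ partialTransversals C s k ↔ F ⊆ s.biUnion C ∧ #F = k ∧ ∀ j ∈ s, #(F ∩ C j) ≤ 1 := by
  simp [partialTransversals]

lemma partialTransversals_zero : partialTransversals C s 0 = {∅} := by
  ext F
  simp only [mem_partialTransversals, card_eq_zero, mem_singleton]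
  constructor
  · exact fun h => h.2.1
  · rintro rfl
    simp

lemma partialTransversals_empty_succ : partialTransversals C ∅ (k + 1) = ∅ := by
  ext F
  simp only [mem_partialTransversals, biUnion_empty, subset_empty, notMem_empty, iff_false]
  rintro ⟨rfl, h, -⟩
  simp at h

lemma disjoint_of_subset_biUnion (hC : Pairwise (Disjoint on C)) {a : ι} (ha : a ∉ s)
    (hF : F ⊆ s.biUnion C) : Disjoint F (C a) := by
  rw [disjoint_left]
  intro x hx hxa
  obtain ⟨j, hj, hxj⟩ := mem_biUnion.mp (hF hx)
  exact disjoint_left.mp (hC (ne_of_mem_of_not_mem hj ha)) hxj hxa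

lemma partialTransversals_insert_succ [DecidableEq ι] (hC : Pairwise (Disjoint on C)) {a : ι}
    (ha : a ∉ s) :
    partialTransversals C (insert a s) (k + 1) =
      partialTransversals C s (k + 1) ∪
        (C a ×ˢ partialTransversals C s k).image (fun p => insert p.1 p.2) := by
  ext F
  simp only [mem_union, mem_image, mem_product, Prod.exists, mem_partialTransversals,
    forall_mem_insert, biUnion_insert]
  constructor
  · rintro ⟨hsub, hcard, haF, hsF⟩
    by_cases hFa : Disjoint F (C a)
    · refine Or.inl ⟨fun x hx => ?_, hcard, hsF⟩
      exact (mem_union.mp (hsub hx)).resolve_left (disjoint_left.mp hFa hx)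
    · obtain ⟨c, hcF, hca⟩ := not_disjoint_iff.mp hFa
      refine Or.inr ⟨c, F.erase c, ⟨hca, fun x hx => ?_, by simp [card_erase_of_mem hcF, hcard],
        fun j hj => (card_le_card (inter_subset_inter_right (erase_subset c F))).trans
          (hsF j hj)⟩, insert_erase hcF⟩
      refine (mem_union.mp (hsub (mem_of_mem_erase hx))).resolve_left fun hxa => ?_
      exact ne_of_mem_erase hx (card_le_one.mp haF x (mem_inter.mpr ⟨mem_of_mem_erase hx, hxa⟩)
        c (mem_inter.mpr ⟨hcF, hca⟩))
  · rintro (⟨hsub, hcard, hsF⟩ | ⟨c, G, ⟨hca, hsub, hcard, hsG⟩, rfl⟩)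
    · refine ⟨hsub.trans subset_union_right, hcard, ?_, hsF⟩
      simp [disjoint_iff_inter_eq_empty.mp (disjoint_of_subset_biUnion hC ha hsub)]
    · have hGa := disjoint_of_subset_biUnion hC ha hsub
      have hcG : c ∉ G := fun h => disjoint_left.mp hGa h hca
      refine ⟨insert_subset (mem_union_left _ hca) (hsub.trans subset_union_right),
        by rw [card_insert_of_notMem hcG, hcard], ?_, fun j hj => ?_⟩
      · rw [insert_inter_of_mem hca, disjoint_iff_inter_eq_empty.mp hGa]
        simp
      · rw [insert_inter_of_notMem (disjoint_left.mp (hC (ne_of_mem_of_not_mem hj ha).symm) hca)]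
        exact hsG j hj

lemma injOn_insert {a : α} : Set.InjOn (insert a) {G : Finset α | a ∉ G} := fun G hG G' hG' h => by
  simpa [erase_insert hG, erase_insert hG'] using congrArg (erase · a) h

lemma sum_powersetCard_succ_insert_prod {R : Type*} [CommSemiring R] [DecidableEq ι]
    (f : ι → R) {a : ι} (ha : a ∉ s) (k : ℕ) :
    ∑ T ∈ (insert a s).powersetCard (k + 1), ∏ j ∈ T, f j =
      ∑ T ∈ s.powersetCard (k + 1), ∏ j ∈ T, f j + f a * ∑ T ∈ s.powersetCard k, ∏ j ∈ T, f j := by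
  have haT : ∀ T ∈ s.powersetCard k, a ∉ T := fun T hT h => ha (mem_powersetCard.mp hT |>.1 h)
  rw [powersetCard_succ_insert ha, sum_union, sum_image, mul_sum]
  · exact congrArg _ (sum_congr rfl fun T hT => prod_insert (haT T hT))
  · exact injOn_insert.mono haT
  · simp only [disjoint_left, mem_image, not_exists, not_and]
    rintro _ hT T' - rfl
    exact ha (mem_powersetCard.mp hT |>.1 (mem_insert_self a T'))

lemma card_partialTransversals [DecidableEq ι] (hC : Pairwise (Disjoint on C)) (s : Finset ι)
    (k : ℕ) :
    #(partialTransversals C s k) = ∑ T ∈ s.powersetCard k, ∏ j ∈ T, #(C j) := by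
  induction s using Finset.induction_on generalizing k with
  | empty =>
    cases k
    · simp [partialTransversals_zero]
    · rw [partialTransversals_empty_succ, powersetCard_eq_empty.mpr (by simp)]
      rfl
  | @insert a s ha ih =>
    cases k with
    | zero => simp [partialTransversals_zero]
    | succ k =>
      have hGa : ∀ {m}, ∀ G ∈ partialTransversals C s m, Disjoint G (C a) := fun G hG =>
        disjoint_of_subset_biUnion hC ha (mem_partialTransversals.mp hG).1
      have hdisj : Disjoint (partialTransversals C s (k + 1))
          ((C a ×ˢ partialTransversals C s k).image (fun p => insert p.1 p.2)) := by
        simp only [disjoint_left, mem_image, mem_product, Prod.exists, not_exists, not_and]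
        rintro _ hF c G ⟨hca, -⟩ rfl
        exact disjoint_left.mp (hGa _ hF) (mem_insert_self c G) hca
      have hinj : Set.InjOn (fun p : α × Finset α => insert p.1 p.2)
          (C a ×ˢ partialTransversals C s k : Finset _) := by
        rintro ⟨c, G⟩ hG ⟨c', G'⟩ hG' h
        simp only [coe_product, Set.mem_prod, mem_coe] at hG hG' h
        have hcG : ∀ {x}, x ∈ C a → x ∉ G := fun hx h => disjoint_left.mp (hGa _ hG.2) h hx
        have hcG' : ∀ {x}, x ∈ C a → x ∉ G' := fun hx h => disjoint_left.mp (hGa _ hG'.2) h hx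
        obtain rfl : c' = c := by
          have : c' ∈ insert c G := h ▸ mem_insert_self c' G'
          simpa [hcG hG'.1] using this
        simpa [erase_insert (hcG hG.1), erase_insert (hcG' hG.1)] using congrArg (erase · c') h
      rw [partialTransversals_insert_succ hC ha, card_union_of_disjoint hdisj,
        card_image_of_injOn hinj, card_product, ih, ih, sum_powersetCard_succ_insert_prod _ ha]

lemma sum_sum_powersetCard_erase {R : Type*} [CommRing R] [DecidableEq ι] (s : Finset ι)
    (f : Finset ι → R) (m : ℕ) :
    ∑ j ∈ s, ∑ T ∈ (s.erase j).powersetCard m, f T =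
      ((#s : R) - m) * ∑ T ∈ s.powersetCard m, f T := by
  have hfilter : ∀ j, (s.erase j).powersetCard m = {T ∈ s.powersetCard m | j ∉ T} := by
    intro j
    ext T
    simp only [mem_powersetCard, mem_filter, subset_erase]
    tauto
  simp only [hfilter, sum_filter]
  rw [sum_comm, mul_sum]
  refine sum_congr rfl fun T hT => ?_
  obtain ⟨hTs, rfl⟩ := mem_powersetCard.mp hT
  rw [← sum_filter, sum_const, filter_notMem_eq_sdiff, card_sdiff_of_subset hTs,
    nsmul_eq_mul, Nat.cast_sub (card_le_card hTs)]

section Sections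

variable {B : ι → Finset α} {w : ι → α}

lemma section_notMem_erase (hB : Pairwise (Disjoint on B)) (hw : ∀ j, w j ∈ B j) (i j : ι) :
    w i ∉ (B j).erase (w j) := by
  intro h
  obtain rfl | hij := eq_or_ne i j
  · exact (notMem_erase _ _) h
  · exact disjoint_left.mp (hB hij) (hw i) (mem_of_mem_erase h)

lemma section_notMem_of_mem_partialTransversals (hB : Pairwise (Disjoint on B))
    (hw : ∀ j, w j ∈ B j) (hF : F ∈ partialTransversals (fun j => (B j).erase (w j)) s k) (i : ι) :
    w i ∉ F := fun h => by
  obtain ⟨j, -, hj⟩ := mem_biUnion.mp ((mem_partialTransversals.mp hF).1 h)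
  exact section_notMem_erase hB hw i j hj

variable [Fintype ι]

lemma filter_disjoint_partialTransversals (hB : Pairwise (Disjoint on B)) (hw : ∀ j, w j ∈ B j)
    (s : Finset ι) (k : ℕ) :
    {F ∈ partialTransversals B s k | Disjoint F (univ.image w)} =
      partialTransversals (fun j => (B j).erase (w j)) s k := by
  ext F
  simp only [mem_filter, disjoint_left, mem_image, mem_univ, true_and, not_exists]
  constructor
  · rintro ⟨hF, hFw⟩
    obtain ⟨hsub, hcard, hle⟩ := mem_partialTransversals.mp hF
    refine mem_partialTransversals.mpr ⟨fun x hx => ?_, hcard, fun j hj =>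
      (card_le_card (inter_subset_inter_left (erase_subset _ _))).trans (hle j hj)⟩
    obtain ⟨j, hj, hxj⟩ := mem_biUnion.mp (hsub hx)
    exact mem_biUnion.mpr ⟨j, hj, mem_erase.mpr ⟨fun h => hFw hx j h.symm, hxj⟩⟩
  · intro hF
    have hwF := section_notMem_of_mem_partialTransversals hB hw hF
    obtain ⟨hsub, hcard, hle⟩ := mem_partialTransversals.mp hF
    refine ⟨mem_partialTransversals.mpr ⟨hsub.trans (biUnion_mono fun j _ => erase_subset _ _),
      hcard, fun j hj => ?_⟩, fun x hx i hi => hwF i (hi ▸ hx)⟩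
    refine (card_le_card fun x hx => ?_).trans (hle j hj)
    obtain ⟨hxF, hxB⟩ := mem_inter.mp hx
    exact mem_inter.mpr ⟨hxF, mem_erase.mpr ⟨fun h => hwF j (h ▸ hxF), hxB⟩⟩

lemma partialTransversals_filter_mem_section [DecidableEq ι] (hB : Pairwise (Disjoint on B))
    (hw : ∀ j, w j ∈ B j) (j₀ : ι) (k : ℕ) :
    {F ∈ partialTransversals B univ (k + 1) | #(F ∩ univ.image w) ≤ 1 ∧ w j₀ ∈ F} =
      (partialTransversals (fun j => (B j).erase (w j)) (univ.erase j₀) k).image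
        (insert (w j₀)) := by
  rw [← filter_disjoint_partialTransversals hB hw]
  have hsplit := partialTransversals_insert_succ (k := k) hB (notMem_erase j₀ univ)
  rw [insert_erase (mem_univ j₀)] at hsplit
  rw [hsplit]
  have hB₀ : ∀ {m}, ∀ G ∈ partialTransversals B (univ.erase j₀) m, Disjoint G (B j₀) :=
    fun G hG => disjoint_of_subset_biUnion hB (notMem_erase j₀ _) (mem_partialTransversals.mp hG).1
  ext F
  simp only [mem_filter, mem_union, mem_image, mem_product, Prod.exists]
  constructor
  · rintro ⟨hF | ⟨c, G, ⟨hc, hG⟩, rfl⟩, hW, hwF⟩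
    · exact absurd (hw j₀) (disjoint_left.mp (hB₀ F hF) hwF)
    · have hwG : w j₀ ∉ G := fun h => disjoint_left.mp (hB₀ G hG) h (hw j₀)
      obtain rfl : w j₀ = c := by simpa [hwG] using hwF
      refine ⟨G, ⟨hG, disjoint_left.mpr fun x hxG hxW => ?_⟩, rfl⟩
      have := card_le_one.mp hW x (mem_inter.mpr ⟨mem_insert_of_mem hxG, hxW⟩) (w j₀)
        (mem_inter.mpr ⟨hwF, mem_image_of_mem w (mem_univ j₀)⟩)
      exact hwG (this ▸ hxG)
  · rintro ⟨G, ⟨hG, hGW⟩, rfl⟩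
    refine ⟨Or.inr ⟨w j₀, G, ⟨hw j₀, hG⟩, rfl⟩, ?_, mem_insert_self _ _⟩
    rw [insert_inter_of_mem (mem_image_of_mem w (mem_univ j₀)),
      disjoint_iff_inter_eq_empty.mp hGW]
    simp

lemma card_filter_card_inter_image_le_one [DecidableEq ι] (hB : Pairwise (Disjoint on B))
    (hw : ∀ j, w j ∈ B j) (k : ℕ) :
    #{F ∈ partialTransversals B univ (k + 1) | #(F ∩ univ.image w) ≤ 1} =
      #(partialTransversals (fun j => (B j).erase (w j)) univ (k + 1)) +
        ∑ j₀, #(partialTransversals (fun j => (B j).erase (w j)) (univ.erase j₀) k) := by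
  have hwinj : Injective w := fun i j h => by
    by_contra hij
    exact disjoint_left.mp (hB hij) (hw i) (h ▸ hw j)
  have hfree : {F ∈ partialTransversals B univ (k + 1) |
      #(F ∩ univ.image w) ≤ 1 ∧ Disjoint F (univ.image w)} =
        partialTransversals (fun j => (B j).erase (w j)) univ (k + 1) := by
    rw [← filter_disjoint_partialTransversals hB hw]
    refine filter_congr fun F _ => and_iff_right_of_imp fun h => ?_
    simp [disjoint_iff_inter_eq_empty.mp h]
  have hmeet : {F ∈ partialTransversals B univ (k + 1) |
      #(F ∩ univ.image w) ≤ 1 ∧ ¬ Disjoint F (univ.image w)} = univ.biUnion fun j₀ =>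
        {F ∈ partialTransversals B univ (k + 1) | #(F ∩ univ.image w) ≤ 1 ∧ w j₀ ∈ F} := by
    ext F
    simp [not_disjoint_iff]
  have hpd : ((univ : Finset ι) : Set ι).PairwiseDisjoint fun j₀ =>
      {F ∈ partialTransversals B univ (k + 1) | #(F ∩ univ.image w) ≤ 1 ∧ w j₀ ∈ F} := by
    intro i _ j _ hij
    simp only [disjoint_left, mem_filter]
    rintro F ⟨-, hW, hi⟩ ⟨-, -, hj⟩
    exact hij (hwinj (card_le_one.mp hW _ (mem_inter.mpr ⟨hi, mem_image_of_mem w (mem_univ i)⟩)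
      _ (mem_inter.mpr ⟨hj, mem_image_of_mem w (mem_univ j)⟩)))
  rw [← card_filter_add_card_filter_not (p := (Disjoint · (univ.image w))), filter_filter,
    filter_filter, hfree, hmeet, card_biUnion hpd]
  simp only [partialTransversals_filter_mem_section hB hw]
  congr 1
  exact sum_congr rfl fun j₀ _ => card_image_of_injOn fun G hG G' hG' =>
    injOn_insert (section_notMem_of_mem_partialTransversals hB hw hG j₀)
      (section_notMem_of_mem_partialTransversals hB hw hG' j₀)

lemma card_filter_card_inter_image_le_one_eq_sum_prod [DecidableEq ι]
    (hB : Pairwise (Disjoint on B)) (hw : ∀ j, w j ∈ B j) (k : ℕ) :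
    (#{F ∈ partialTransversals B univ (k + 1) | #(F ∩ univ.image w) ≤ 1} : ℤ) =
      ∑ T ∈ univ.powersetCard (k + 1), ∏ j ∈ T, ((#(B j) : ℤ) - 1) +
        ((Fintype.card ι : ℤ) - k) * ∑ T ∈ univ.powersetCard k, ∏ j ∈ T, ((#(B j) : ℤ) - 1) := by
  have hC : Pairwise (Disjoint on fun j => (B j).erase (w j)) :=
    fun i j h => (hB h).mono (erase_subset _ _) (erase_subset _ _)
  have hcardC : ∀ s m, (#(partialTransversals (fun j => (B j).erase (w j)) s m) : ℤ) =
      ∑ T ∈ s.powersetCard m, ∏ j ∈ T, ((#(B j) : ℤ) - 1) := fun s m => by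
    simp [card_partialTransversals hC, card_erase_of_mem (hw _),
      Nat.cast_sub (card_pos.mpr ⟨_, hw _⟩)]
  rw [card_filter_card_inter_image_le_one hB hw, Nat.cast_add, Nat.cast_sum, hcardC]
  simp only [hcardC, sum_sum_powersetCard_erase, card_univ]

end Sections

end PartialTransversals

section Segments

variable {S T : Finset Cell} {p q r : Cell}

lemma mem_image_Icc_left {a b y : ℤ} :
    p ∈ (Icc a b).image (fun x => (x, y)) ↔ a ≤ p.1 ∧ p.1 ≤ b ∧ p.2 = y := by
  obtain ⟨p1, p2⟩ := p
  simp only [mem_image, mem_Icc, Prod.mk.injEq]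
  constructor
  · rintro ⟨x, hx, rfl, rfl⟩
    exact ⟨hx.1, hx.2, rfl⟩
  · rintro ⟨h1, h2, rfl⟩
    exact ⟨p1, ⟨h1, h2⟩, rfl, rfl⟩

lemma mem_image_Icc_right {a b x : ℤ} :
    p ∈ (Icc a b).image (fun y => (x, y)) ↔ p.1 = x ∧ a ≤ p.2 ∧ p.2 ≤ b := by
  obtain ⟨p1, p2⟩ := p
  simp only [mem_image, mem_Icc, Prod.mk.injEq]
  constructor
  · rintro ⟨y, hy, rfl, rfl⟩
    exact ⟨rfl, hy⟩
  · rintro ⟨rfl, h1, h2⟩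
    exact ⟨p2, ⟨h1, h2⟩, rfl, rfl⟩

lemma IsHSeg.snd_eq_s15 (hS : IsHSeg S) (hp : p ∈ S) (hq : q ∈ S) : p.2 = q.2 := by
  obtain ⟨y, a, b, -, rfl⟩ := hS
  rw [mem_image_Icc_left] at hp hq
  omega

lemma IsVSeg.fst_eq_s15 (hS : IsVSeg S) (hp : p ∈ S) (hq : q ∈ S) : p.1 = q.1 := by
  obtain ⟨x, a, b, -, rfl⟩ := hS
  rw [mem_image_Icc_right] at hp hq
  omega

lemma IsHSeg.mem_of_le_of_le (hS : IsHSeg S) (hp : p ∈ S) (hq : q ∈ S) (hr : r.2 = p.2)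
    (hpr : p.1 ≤ r.1) (hrq : r.1 ≤ q.1) : r ∈ S := by
  obtain ⟨y, a, b, -, rfl⟩ := hS
  rw [mem_image_Icc_left] at hp hq ⊢
  omega

lemma IsVSeg.mem_of_le_of_le (hS : IsVSeg S) (hp : p ∈ S) (hq : q ∈ S) (hr : r.1 = p.1)
    (hpr : p.2 ≤ r.2) (hrq : r.2 ≤ q.2) : r ∈ S := by
  obtain ⟨x, a, b, -, rfl⟩ := hS
  rw [mem_image_Icc_right] at hp hq ⊢
  omega

lemma IsHSeg.eq_of_mem_of_isVSeg (hS : IsHSeg S) (hT : IsVSeg T) (hpS : p ∈ S) (hqS : q ∈ S)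
    (hpT : p ∈ T) (hqT : q ∈ T) : p = q :=
  Prod.ext (hT.fst_eq_s15 hpT hqT) (hS.snd_eq_s15 hpS hqS)

lemma IsHSeg.exists_adjacent (hS : IsHSeg S) (hS2 : 2 ≤ #S) :
    ∃ x y : ℤ, (x, y) ∈ S ∧ (x + 1, y) ∈ S := by
  obtain ⟨p, hp, q, hq, hpq⟩ := one_lt_card.mp hS2
  have hy := hS.snd_eq_s15 hp hq
  wlog hlt : p.1 < q.1 generalizing p q
  · exact this q hq p hp (Ne.symm hpq) hy.symm
      (lt_of_le_of_ne (not_lt.mp hlt) fun h => hpq (Prod.ext h.symm hy))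
  exact ⟨p.1, p.2, hp, hS.mem_of_le_of_le hp hq rfl (Int.le_add_one le_rfl) hlt⟩

lemma IsHSeg.image_swap (hS : IsHSeg S) : IsVSeg (S.image Prod.swap) := by
  obtain ⟨y, a, b, hab, rfl⟩ := hS
  exact ⟨y, a, b, hab, by rw [image_image]; rfl⟩

lemma IsVSeg.image_swap (hS : IsVSeg S) : IsHSeg (S.image Prod.swap) := by
  obtain ⟨x, a, b, hab, rfl⟩ := hS
  exact ⟨x, a, b, hab, by rw [image_image]; rfl⟩


end Segments

section Transpose

section

variable {α β : Type*} [DecidableEq α] [DecidableEq β]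

lemma image_swap_image_swap (S : Finset (α × β)) : (S.image Prod.swap).image Prod.swap = S := by
  simp [image_image]

lemma mem_image_swap {S : Finset (α × β)} {p : β × α} : p ∈ S.image Prod.swap ↔ p.swap ∈ S := by
  simp [Prod.swap_eq_iff_eq_swap]

end

variable {P M : Finset Cell}

lemma IsThin.image_swap (hP : IsThin P) : IsThin (P.image Prod.swap) := by
  rintro ⟨a, ha⟩
  simp only [insert_subset_iff, singleton_subset_iff, mem_image_swap] at ha
  exact hP ⟨a.swap, by simpa [insert_subset_iff] using ⟨ha.1, ha.2.2.1, ha.2.1, ha.2.2.2⟩⟩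

lemma maximal_image_swap {A A' : Finset Cell → Prop} (hA : ∀ S, A S → A' (S.image Prod.swap))
    (hA' : ∀ S, A' S → A (S.image Prod.swap))
    (h : A M ∧ M ⊆ P ∧ ∀ I', A I' → I' ⊆ P → M ⊆ I' → I' = M) :
    A' (M.image Prod.swap) ∧ M.image Prod.swap ⊆ P.image Prod.swap ∧
      ∀ I', A' I' → I' ⊆ P.image Prod.swap → M.image Prod.swap ⊆ I' → I' = M.image Prod.swap := by
  obtain ⟨hM, hMP, hmax⟩ := h
  refine ⟨hA M hM, image_subset_image hMP, fun I' hI' hI'P hMI' => ?_⟩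
  have hswap := hmax (I'.image Prod.swap) (hA' I' hI')
    (by simpa [image_swap_image_swap] using image_subset_image (f := Prod.swap) hI'P)
    (by simpa [image_swap_image_swap] using image_subset_image (f := Prod.swap) hMI')
  rw [← hswap, image_swap_image_swap]

lemma IsMaxInterval.image_swap (h : IsMaxInterval P M) :
    IsMaxInterval (P.image Prod.swap) (M.image Prod.swap) := by
  rcases h with h | h
  · exact Or.inr (maximal_image_swap (fun _ => IsHSeg.image_swap) (fun _ => IsVSeg.image_swap) h)
  · exact Or.inl (maximal_image_swap (fun _ => IsVSeg.image_swap) (fun _ => IsHSeg.image_swap) h)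

end Transpose

lemma IsThin.eq_of_isVSeg {P S T : Finset Cell} (hP : IsThin P) (hS : IsVSeg S) (hT : IsVSeg T)
    (hSP : S ⊆ P) (hTP : T ⊆ P) {x y y' : ℤ} (h₁ : (x, y) ∈ S) (h₂ : (x, y') ∈ S)
    (h₃ : (x + 1, y) ∈ T) (h₄ : (x + 1, y') ∈ T) : y = y' := by
  by_contra hne
  wlog hlt : y < y' generalizing y y'
  · exact this h₂ h₁ h₄ h₃ (Ne.symm hne) (lt_of_le_of_ne (not_lt.mp hlt) (Ne.symm hne))
  refine hP ⟨(x, y), ?_⟩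
  simp only [insert_subset_iff, singleton_subset_iff]
  exact ⟨hSP h₁, hTP h₃, hSP (hS.mem_of_le_of_le h₁ h₂ rfl (Int.le_add_one le_rfl) hlt),
    hTP (hT.mem_of_le_of_le h₃ h₄ rfl (Int.le_add_one le_rfl) hlt)⟩

section Brush

variable {ι : Type*} {P J M : Finset Cell} {I : ι → Finset Cell}

theorem eq_handle_or_bristle_of_isHSeg (hP : IsThin P) (hJ : IsHSeg J) (hJP : J ⊆ P)
    (hI : ∀ j, IsVSeg (I j)) (hdisj : Pairwise (Disjoint on I)) (hmeet : ∀ j, (I j ∩ J).Nonempty)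
    (hPI : ∀ p ∈ P, ∃ j, p ∈ I j) (hIP : ∀ j, I j ⊆ P) (hM : IsMaxInterval P M) (hM2 : 2 ≤ #M) :
    M = J ∨ ∃ j, M = I j := by
  choose w hw using hmeet
  simp only [mem_inter] at hw
  have hcol : ∀ {i j p q}, p ∈ I i → q ∈ I j → p.1 = q.1 → i = j := by
    intro i j p q hp hq hpq
    by_contra hij
    have : w i = w j := Prod.ext (by rw [(hI i).fst_eq_s15 (hw i).1 hp, hpq, (hI j).fst_eq_s15 hq (hw j).1])
      (hJ.snd_eq_s15 (hw i).2 (hw j).2)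
    exact disjoint_left.mp (hdisj hij) (hw i).1 (this ▸ (hw j).1)
  rcases hM with ⟨hMseg, hMP, hmax⟩ | ⟨hMseg, hMP, hmax⟩
  · left
    obtain ⟨x, y, h₁, h₂⟩ := hMseg.exists_adjacent hM2
    obtain ⟨i, hi⟩ := hPI _ (hMP h₁)
    obtain ⟨i', hi'⟩ := hPI _ (hMP h₂)
    have hx : (w i).1 = x := (hI i).fst_eq_s15 (hw i).1 hi
    have hx' : (w i').1 = x + 1 := (hI i').fst_eq_s15 (hw i').1 hi'
    have hwi : (x, (w i).2) ∈ I i := by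
      rw [← hx]
      exact (hw i).1
    have hwi' : (x + 1, (w i).2) ∈ I i' := by
      rw [← hx', hJ.snd_eq_s15 (hw i).2 (hw i').2]
      exact (hw i').1
    have hy : y = (w i).2 := hP.eq_of_isVSeg (hI i) (hI i') (hIP i) (hIP i') hi hwi hi' hwi'
    refine (hmax J hJ hJP fun p hp => ?_).symm
    obtain ⟨l, hl⟩ := hPI p (hMP hp)
    have : p = w l := Prod.ext ((hI l).fst_eq_s15 hl (hw l).1)
      (by rw [hMseg.snd_eq_s15 hp h₁, hy, hJ.snd_eq_s15 (hw i).2 (hw l).2])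
    exact this ▸ (hw l).2
  · right
    obtain ⟨p, hp⟩ := card_pos.mp (by omega : 0 < #M)
    obtain ⟨j, hj⟩ := hPI p (hMP hp)
    refine ⟨j, (hmax (I j) (hI j) (hIP j) fun q hq => ?_).symm⟩
    obtain ⟨l, hl⟩ := hPI q (hMP hq)
    rwa [hcol hl hj (hMseg.fst_eq_s15 hq hp)] at hl

end Brush

section PureBrush

variable {P J M F : Finset Cell} {d : ℕ} {I : Fin d → Finset Cell}

lemma isRookSet_iff_forall_card_inter_le_one :
    IsRookSet P F ↔ F ⊆ P ∧ ∀ M, IsMaxInterval P M → #(F ∩ M) ≤ 1 := by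
  simp only [IsRookSet, Attacks, card_le_one, mem_inter]
  refine and_congr_right fun _ => ⟨fun h M hM c hc e he => ?_,
    fun h c hc e he ⟨hne, M, hM, hcM, heM⟩ => hne (h M hM c ⟨hc, hcM⟩ e ⟨he, heM⟩)⟩
  by_contra hne
  exact h c hc.1 e he.1 ⟨hne, M, hM, hc.2, he.2⟩

theorem IsPureBrush.eq_handle_or_bristle (h : IsPureBrush P J d I) (hM : IsMaxInterval P M)
    (hM2 : 2 ≤ #M) : M = J ∨ ∃ j, M = I j := by
  obtain ⟨-, -, hP, -, horient, hdisj, hmeet, hun⟩ := h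
  have hPI : ∀ p ∈ P, ∃ j, p ∈ I j := by simp [← hun]
  have hIP : ∀ j, I j ⊆ P := fun j => hun ▸ subset_biUnion_of_mem I (mem_univ j)
  rcases horient with ⟨hJ, hI⟩ | ⟨hJ, hI⟩
  · exact eq_handle_or_bristle_of_isHSeg hP hJ.1 hJ.2.1 (fun j => (hI j).1) hdisj hmeet hPI hIP
      hM hM2
  · have hsw := eq_handle_or_bristle_of_isHSeg (I := fun j => (I j).image Prod.swap) hP.image_swap
      hJ.1.image_swap (image_subset_image hJ.2.1) (fun j => (hI j).1.image_swap)
      (fun i j hij => (disjoint_image Prod.swap_injective).mpr (hdisj i j hij))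
      (fun j => by simpa [← image_inter _ _ Prod.swap_injective] using hmeet j)
      (fun p hp => by
        obtain ⟨q, hq, rfl⟩ := mem_image.mp hp
        obtain ⟨j, hj⟩ := hPI q hq
        exact ⟨j, mem_image_of_mem _ hj⟩)
      (fun j => image_subset_image (hIP j)) hM.image_swap
      (by rwa [card_image_of_injective _ Prod.swap_injective])
    simpa only [(image_injective Prod.swap_injective).eq_iff] using hsw

lemma IsPureBrush.isRookSet_iff (h : IsPureBrush P J d I) :
    IsRookSet P F ↔ F ⊆ P ∧ (∀ j, #(F ∩ I j) ≤ 1) ∧ #(F ∩ J) ≤ 1 := by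
  have ⟨_, _, _, _, horient, _⟩ := h
  have hmax : IsMaxInterval P J ∧ ∀ j, IsMaxInterval P (I j) := by
    rcases horient with ⟨hJ, hI⟩ | ⟨hJ, hI⟩
    exacts [⟨Or.inl hJ, fun j => Or.inr (hI j)⟩, ⟨Or.inr hJ, fun j => Or.inl (hI j)⟩]
  rw [isRookSet_iff_forall_card_inter_le_one]
  refine and_congr_right fun _ => ⟨fun hF => ⟨fun j => hF _ (hmax.2 j), hF _ hmax.1⟩,
    fun ⟨hFI, hFJ⟩ M hM => ?_⟩
  by_cases hM2 : 2 ≤ #M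
  · rcases h.eq_handle_or_bristle hM hM2 with rfl | ⟨j, rfl⟩
    exacts [hFJ, hFI j]
  · exact (card_le_card inter_subset_right).trans (by omega)

lemma IsPureBrush.handle_eq_image (h : IsPureBrush P J d I) {w : Fin d → Cell}
    (hw : ∀ j, w j ∈ I j ∩ J) : J = univ.image w := by
  obtain ⟨-, -, -, -, horient, -, -, hun⟩ := h
  refine Subset.antisymm (fun p hp => ?_) (image_subset_iff.mpr fun j _ => (mem_inter.mp (hw j)).2)
  have hJP : J ⊆ P := by rcases horient with ⟨hJ, -⟩ | ⟨hJ, -⟩ <;> exact hJ.2.1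
  obtain ⟨j, -, hj⟩ := mem_biUnion.mp (hun ▸ hJP hp)
  refine mem_image.mpr ⟨j, mem_univ j, ?_⟩
  obtain ⟨hwI, hwJ⟩ := mem_inter.mp (hw j)
  rcases horient with ⟨hJ, hI⟩ | ⟨hJ, hI⟩
  · exact hJ.1.eq_of_mem_of_isVSeg (hI j).1 hwJ hp hwI hj
  · exact (hI j).1.eq_of_mem_of_isVSeg hJ.1 hwI hj hwJ hp

end PureBrush

theorem statement15_general (P J : Finset Cell) (d : ℕ) (I : Fin d → Finset Cell)
    (h : IsPureBrush P J d I) (k : ℕ) (hk1 : 1 ≤ k) :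
    ({F : Finset Cell | F.card = k ∧ IsRookSet P F}.ncard : ℤ) =
      esymm k (fun j => ((I j).card : ℤ) - 1) +
        ((d : ℤ) - k + 1) * esymm (k - 1) (fun j => ((I j).card : ℤ) - 1) := by
  have ⟨_, _, _, _, _, hdisj, hmeet, hun⟩ := h
  choose w hw using hmeet
  have hsets : {F : Finset Cell | F.card = k ∧ IsRookSet P F} =
      ↑{F ∈ partialTransversals I univ k | #(F ∩ univ.image w) ≤ 1} := by
    ext F
    rw [Set.mem_ofPred_eq, h.isRookSet_iff, coe_filter, Set.mem_ofPred_eq, mem_partialTransversals,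
      ← hun, ← h.handle_eq_image hw]
    simp only [mem_univ, forall_const]
    tauto
  obtain ⟨k, rfl⟩ := Nat.exists_eq_add_of_le' hk1
  rw [hsets, Set.ncard_coe_finset, card_filter_card_inter_image_le_one_eq_sum_prod hdisj
    fun j => (mem_inter.mp (hw j)).1]
  simp only [esymm, Fintype.card_fin, add_tsub_cancel_right, Nat.cast_add, Nat.cast_one]
  ring

/-- For a pure brush polyomino, the number of `k`-element sets of pairwise
non-attacking cells equals `e_k(ℓ-1) + (d-k+1)·e_{k-1}(ℓ-1)`. -/
theorem statement15 (P J : Finset Cell) (d : ℕ) (I : Fin d → Finset Cell)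
    (h : IsPureBrush P J d I) (k : ℕ) (hk1 : 1 ≤ k) (hkd : k ≤ d) :
    ({F : Finset Cell | F.card = k ∧ IsRookSet P F}.ncard : ℤ) =
      esymm k (fun j => ((I j).card : ℤ) - 1) +
        ((d : ℤ) - k + 1) * esymm (k - 1) (fun j => ((I j).card : ℤ) - 1) :=
  statement15_general P J d I h k hk1
end
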